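/- arXiv:2001.05559 — 6 statements merged into one kernel-verified Lean document; each statement's English description precedes it below -/
import Mathlib

section
/- Let W ∈ ℝ^{n×m} define a gauged RBM, i.e. (𝟙,𝟙) minimizes E_W(v,h) = −∑_{i,j} W_{ij} v_i h_j over {−1,1}^n × {−1,1}^m, with ground state energy E0 = −∑_{i,j} W_{ij}. Fix integers 0 ≤ n_v ≤ n and 0 ≤ m_h ≤ m and set d = n_v/n + m_h/m − 2 n_v m_h/(nm). Then the arithmetic mean of E_W(v,h) over all configurations (v,h) having exactly n_v coordinates with v_i = −1 and exactly m_h coordinates with h_j = −1 equals (1 − 2d)·E0. -/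
open Finset

lemma card_filter_eq_choose {α : Type*} [Fintype α] [DecidableEq α] (k : ℕ) :
    (Finset.univ.filter (fun A : Finset α => A.card = k)).card = (Fintype.card α).choose k := by
  have h : Finset.univ.filter (fun A : Finset α => A.card = k)
      = Finset.powersetCard k (Finset.univ : Finset α) := by
    rw [Finset.powersetCard_eq_filter, Finset.powerset_univ]
  rw [h, Finset.card_powersetCard, Finset.card_univ]

lemma card_filter_mem {α : Type*} [Fintype α] [DecidableEq α] (k : ℕ) (i : α) :
    (Finset.univ.filter (fun A : Finset α => A.card = k ∧ i ∈ A)).card * Fintype.card α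
      = k * (Fintype.card α).choose k := by
  rcases Nat.eq_zero_or_pos k with rfl | hk
  · have h : Finset.univ.filter (fun A : Finset α => A.card = 0 ∧ i ∈ A) = ∅ := by
      ext A
      simp only [mem_filter, mem_univ, true_and, notMem_empty, iff_false, not_and]
      intro h0; simp [Finset.card_eq_zero.mp h0]
    rw [h]
    simp
  · obtain ⟨k', rfl⟩ := Nat.exists_eq_succ_of_ne_zero hk.ne'
    have hcard : (Finset.univ.filter (fun A : Finset α => A.card = k' + 1 ∧ i ∈ A)).card
        = (Fintype.card α - 1).choose k' := by
      have hb : (Finset.univ.filter (fun A : Finset α => A.card = k' + 1 ∧ i ∈ A)).card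
          = (Finset.powersetCard k' ((Finset.univ : Finset α).erase i)).card := by
        refine Finset.card_bij' (fun A _ => A.erase i) (fun C _ => insert i C) ?_ ?_ ?_ ?_
        · intro A hA
          simp only [mem_filter, mem_univ, true_and] at hA
          rw [Finset.mem_powersetCard]
          exact ⟨Finset.erase_subset_erase i (Finset.subset_univ A),
            by rw [Finset.card_erase_of_mem hA.2, hA.1]; rfl⟩
        · intro C hC
          rw [Finset.mem_powersetCard] at hC
          have hiC : i ∉ C := fun h => (Finset.mem_erase.mp (hC.1 h)).1 rfl
          simp only [mem_filter, mem_univ, true_and]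
          exact ⟨by rw [Finset.card_insert_of_notMem hiC, hC.2], Finset.mem_insert_self i C⟩
        · intro A hA
          simp only [mem_filter, mem_univ, true_and] at hA
          exact Finset.insert_erase hA.2
        · intro C hC
          rw [Finset.mem_powersetCard] at hC
          have hiC : i ∉ C := fun h => (Finset.mem_erase.mp (hC.1 h)).1 rfl
          exact Finset.erase_insert hiC
      rw [hb, Finset.card_powersetCard, Finset.card_erase_of_mem (Finset.mem_univ i),
        Finset.card_univ]
    rw [hcard]
    have hpos : 0 < Fintype.card α := Fintype.card_pos_iff.mpr ⟨i⟩
    obtain ⟨n', hn'⟩ := Nat.exists_eq_succ_of_ne_zero hpos.ne'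
    rw [hn']
    simp only [Nat.succ_sub_one]
    rw [Nat.mul_comm, Nat.add_one_mul_choose_eq, Nat.mul_comm]

lemma sum_sign {α : Type*} [Fintype α] [DecidableEq α] (k : ℕ) (i : α) :
    ∑ A ∈ Finset.univ.filter (fun A : Finset α => A.card = k),
        (if i ∈ A then (-1 : ℝ) else 1)
      = (1 - 2 * k / Fintype.card α) * ((Fintype.card α).choose k : ℝ) := by
  have hpos : 0 < Fintype.card α := Fintype.card_pos_iff.mpr ⟨i⟩
  have hn : (0 : ℝ) < Fintype.card α := by exact_mod_cast hpos
  rw [Finset.sum_ite, Finset.sum_const, Finset.sum_const, Finset.filter_filter,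
    Finset.filter_filter]
  set K := (Finset.univ.filter (fun A : Finset α => A.card = k ∧ i ∈ A)).card with hKdef
  set K' := (Finset.univ.filter (fun A : Finset α => A.card = k ∧ ¬ i ∈ A)).card with hK'def
  have hsplit : K + K' = (Fintype.card α).choose k := by
    rw [← card_filter_eq_choose (α := α) k, hKdef, hK'def]
    rw [← Finset.filter_filter, ← Finset.filter_filter]
    exact Finset.card_filter_add_card_filter_not _
  have hK : (K : ℝ) * (Fintype.card α) = k * ((Fintype.card α).choose k : ℝ) := by
    exact_mod_cast congrArg (Nat.cast : ℕ → ℝ) (card_filter_mem k i)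
  have hK' : (K' : ℝ) = ((Fintype.card α).choose k : ℝ) - K := by
    have := congrArg (Nat.cast : ℕ → ℝ) hsplit
    push_cast at this; linarith
  have hKval : (K : ℝ) = k * ((Fintype.card α).choose k : ℝ) / Fintype.card α := by
    field_simp; linarith [hK]
  rw [nsmul_eq_mul, nsmul_eq_mul, hK', hKval]
  field_simp
  ring

lemma sum_swap4 {ι κ σ τ M : Type*} [AddCommMonoid M] (s : Finset ι) (t : Finset κ)
    (u : Finset σ) (w : Finset τ) (f : ι → κ → σ → τ → M) :
    ∑ a ∈ s, ∑ b ∈ t, ∑ c ∈ u, ∑ d ∈ w, f a b c d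
      = ∑ c ∈ u, ∑ d ∈ w, ∑ a ∈ s, ∑ b ∈ t, f a b c d := by
  calc ∑ a ∈ s, ∑ b ∈ t, ∑ c ∈ u, ∑ d ∈ w, f a b c d
      = ∑ a ∈ s, ∑ c ∈ u, ∑ b ∈ t, ∑ d ∈ w, f a b c d :=
        Finset.sum_congr rfl fun a _ => Finset.sum_comm
    _ = ∑ c ∈ u, ∑ a ∈ s, ∑ b ∈ t, ∑ d ∈ w, f a b c d := Finset.sum_comm
    _ = ∑ c ∈ u, ∑ a ∈ s, ∑ d ∈ w, ∑ b ∈ t, f a b c d :=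
        Finset.sum_congr rfl fun c _ => Finset.sum_congr rfl fun a _ => Finset.sum_comm
    _ = ∑ c ∈ u, ∑ d ∈ w, ∑ a ∈ s, ∑ b ∈ t, f a b c d :=
        Finset.sum_congr rfl fun c _ => Finset.sum_comm


/-- The energy of an unbiased `(n,m)`-RBM with weights `W` at configuration
`(v, h)` with `v ∈ {−1,1}^n`, `h ∈ {−1,1}^m`. -/
noncomputable def rbmEnergy (n m : ℕ) (W : Fin n → Fin m → ℝ)
    (v : Fin n → ℝ) (h : Fin m → ℝ) : ℝ :=
  -(∑ i : Fin n, ∑ j : Fin m, W i j * v i * h j)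

/-- For a gauged RBM (the all-ones configuration is a ground state) with ground
state energy `E0 = −∑ i j, W i j`, the arithmetic mean of the energy over all
configurations with exactly `n_v` visible spins equal to `−1` (flipped set `A`)
and exactly `m_h` hidden spins equal to `−1` (flipped set `B`) equals
`(1 − 2d)·E0`, where `d = n_v/n + m_h/m − 2 n_v m_h/(n m)`. -/
theorem rbm_average_energy_at_distance (n m : ℕ) (hn : 0 < n) (hm : 0 < m)
    (W : Fin n → Fin m → ℝ)
    (hgauge : ∀ (v : Fin n → ℝ) (h : Fin m → ℝ),
      (∀ i, v i = 1 ∨ v i = -1) → (∀ j, h j = 1 ∨ h j = -1) →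
      rbmEnergy n m W (fun _ => 1) (fun _ => 1) ≤ rbmEnergy n m W v h)
    (nv mh : ℕ) (hnv : nv ≤ n) (hmh : mh ≤ m) :
    (∑ A ∈ Finset.univ.filter (fun A : Finset (Fin n) => A.card = nv),
      ∑ B ∈ Finset.univ.filter (fun B : Finset (Fin m) => B.card = mh),
        rbmEnergy n m W (fun i => if i ∈ A then -1 else 1)
          (fun j => if j ∈ B then -1 else 1)) /
      (((Finset.univ.filter (fun A : Finset (Fin n) => A.card = nv)).card : ℝ) *
        ((Finset.univ.filter (fun B : Finset (Fin m) => B.card = mh)).card : ℝ)) =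
    (1 - 2 * ((nv : ℝ) / n + (mh : ℝ) / m - 2 * nv * mh / (n * m))) *
      (-(∑ i : Fin n, ∑ j : Fin m, W i j)) := by
  set F := Finset.univ.filter (fun A : Finset (Fin n) => A.card = nv) with hF
  set G := Finset.univ.filter (fun B : Finset (Fin m) => B.card = mh) with hG
  have expand : (∑ A ∈ F, ∑ B ∈ G,
      rbmEnergy n m W (fun i => if i ∈ A then -1 else 1)
        (fun j => if j ∈ B then -1 else 1))
      = -(∑ i : Fin n, ∑ j : Fin m, W i j *
          (∑ A ∈ F, if i ∈ A then (-1:ℝ) else 1) *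
          (∑ B ∈ G, if j ∈ B then (-1:ℝ) else 1)) := by
    simp only [rbmEnergy, Finset.sum_neg_distrib]
    congr 1
    rw [sum_swap4]
    refine Finset.sum_congr rfl fun i _ => Finset.sum_congr rfl fun j _ => ?_
    simp only [Finset.mul_sum, Finset.sum_mul]
    exact Finset.sum_comm
  have hSA : ∀ i : Fin n, (∑ A ∈ F, if i ∈ A then (-1:ℝ) else 1)
      = (1 - 2 * nv / n) * (n.choose nv : ℝ) := by
    intro i
    have h := sum_sign (α := Fin n) nv i
    rw [Fintype.card_fin] at h
    exact h
  have hSB : ∀ j : Fin m, (∑ B ∈ G, if j ∈ B then (-1:ℝ) else 1)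
      = (1 - 2 * mh / m) * (m.choose mh : ℝ) := by
    intro j
    have h := sum_sign (α := Fin m) mh j
    rw [Fintype.card_fin] at h
    exact h
  have hFcard : (F.card : ℝ) = (n.choose nv : ℝ) := by
    rw [hF, card_filter_eq_choose, Fintype.card_fin]
  have hGcard : (G.card : ℝ) = (m.choose mh : ℝ) := by
    rw [hG, card_filter_eq_choose, Fintype.card_fin]
  have hCn : (0:ℝ) < (n.choose nv : ℝ) := by exact_mod_cast Nat.choose_pos hnv
  have hCm : (0:ℝ) < (m.choose mh : ℝ) := by exact_mod_cast Nat.choose_pos hmh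
  have hn' : (0:ℝ) < n := by exact_mod_cast hn
  have hm' : (0:ℝ) < m := by exact_mod_cast hm
  rw [expand]
  simp only [hSA, hSB, hFcard, hGcard]
  have key : ∑ i : Fin n, ∑ j : Fin m,
      W i j * ((1 - 2 * nv / n) * (n.choose nv : ℝ)) * ((1 - 2 * mh / m) * (m.choose mh : ℝ))
      = (∑ i : Fin n, ∑ j : Fin m, W i j) * ((1 - 2 * nv / n) * (n.choose nv : ℝ))
        * ((1 - 2 * mh / m) * (m.choose mh : ℝ)) := by
    rw [Finset.sum_mul, Finset.sum_mul]
    refine Finset.sum_congr rfl fun i _ => ?_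
    rw [Finset.sum_mul, Finset.sum_mul]
  rw [key]
  field_simp
  ring
end

section
/- Let W ∈ ℝ^{n×m}, let γ ∈ ℝ, and define the updated weights W'_{ij} = W_{ij} − γ for all i,j (the mode-informed update of a gauged RBM with unit decrement scaled by learning rate γ). Then for every configuration (v,h) ∈ {−1,1}^n × {−1,1}^m at distance d from the all-ones configuration 𝟙, the energy change satisfies E_{W'}(v,h) − E_W(v,h) = γ·n·m·(1 − 2d). -/
open Finset

lemma sum_pm (k : ℕ) (f : Fin k → ℝ) (hf : ∀ i, f i = 1 ∨ f i = -1) :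
    ∑ i, f i = (k : ℝ) - 2 * ((Finset.univ.filter (fun i => f i = -1)).card : ℝ) := by
  rw [← Finset.sum_filter_add_sum_filter_not Finset.univ (fun i => f i = -1)]
  rw [Finset.sum_congr rfl (fun i hi => (Finset.mem_filter.mp hi).2),
      Finset.sum_congr rfl (fun i hi => (hf i).resolve_right (Finset.mem_filter.mp hi).2)]
  rw [Finset.sum_const, Finset.sum_const]
  have : (Finset.univ.filter (fun i => ¬ f i = -1)).card
      = k - (Finset.univ.filter (fun i => f i = -1)).card := by
    rw [Finset.filter_not, Finset.card_sdiff_of_subset (Finset.filter_subset _ _), Finset.card_univ,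
      Fintype.card_fin]
  rw [this]
  have hle : (Finset.univ.filter (fun i => f i = -1)).card ≤ k := by
    simpa using Finset.card_filter_le Finset.univ (fun i => f i = -1)
  simp only [nsmul_eq_mul, mul_one, mul_neg_one]
  rw [Nat.cast_sub hle]
  ring

/-- Under the uniform mode-informed update `W' i j = W i j − γ`, every
configuration `(v, h)` at distance `d` from the all-ones configuration
(with `n_v` visible and `m_h` hidden spins equal to `−1`, and
`d = n_v/n + m_h/m − 2 n_v m_h/(n m)`) has its energy changed by
`γ·n·m·(1 − 2d)`. -/
theorem rbm_energy_change_mode_update (n m : ℕ) (hn : 0 < n) (hm : 0 < m)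
    (W : Fin n → Fin m → ℝ) (γ : ℝ)
    (v : Fin n → ℝ) (h : Fin m → ℝ)
    (hv : ∀ i, v i = 1 ∨ v i = -1) (hh : ∀ j, h j = 1 ∨ h j = -1) :
    rbmEnergy n m (fun i j => W i j - γ) v h - rbmEnergy n m W v h =
      γ * n * m *
        (1 - 2 * ((((Finset.univ.filter (fun i => v i = -1)).card : ℝ) / n) +
          (((Finset.univ.filter (fun j => h j = -1)).card : ℝ) / m) -
          2 * ((Finset.univ.filter (fun i => v i = -1)).card : ℝ) *
            ((Finset.univ.filter (fun j => h j = -1)).card : ℝ) / (n * m))) := by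
  have key : rbmEnergy n m (fun i j => W i j - γ) v h - rbmEnergy n m W v h
      = γ * (∑ i, v i) * (∑ j, h j) := by
    have e : ∀ (i : Fin n) (j : Fin m),
        (W i j - γ) * v i * h j = W i j * v i * h j - γ * (v i * h j) := by
      intros; ring
    simp only [rbmEnergy, e, Finset.sum_sub_distrib, ← Finset.mul_sum]
    rw [← Finset.sum_mul]
    ring
  rw [key, sum_pm n v hv, sum_pm m h hh]
  have hn' : (n : ℝ) ≠ 0 := Nat.cast_ne_zero.mpr hn.ne'
  have hm' : (m : ℝ) ≠ 0 := Nat.cast_ne_zero.mpr hm.ne'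
  field_simp
  ring
end

section
/- Fix a reference configuration (v0,h0) ∈ {−1,1}^n × {−1,1}^m and let s = (v,h) be drawn uniformly at random from the 2^{n+m} configurations. Let D = d(s,(v0,h0)) be the random distance from the reference. Then Var(D) = 1/(4nm). -/
open Finset

/-- If flipping coordinate `i` negates `F`, the sum of `F` over all Bool vectors is 0. -/
lemma flip_sum_zero {n : ℕ} (i : Fin n) (F : (Fin n → Bool) → ℝ)
    (hF : ∀ v, F (Function.update v i (!v i)) = - F v) :
    ∑ v : Fin n → Bool, F v = 0 := by
  apply Finset.sum_ninvolution (fun v => Function.update v i (!v i))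
  · intro v; rw [hF]; ring
  · intro v hv h
    apply hv
    have := congrFun h i
    simp [Function.update_self] at this
  · intro v; exact Finset.mem_univ _
  · intro v
    funext j
    by_cases hj : j = i
    · subst hj; simp [Function.update_self]
    · simp [Function.update_of_ne hj]

/-- The centered indicator `xv v0 v i`. -/
noncomputable def xv {n : ℕ} (v0 : Fin n → Bool) (v : Fin n → Bool) (i : Fin n) : ℝ :=
  (if v i ≠ v0 i then (1 : ℝ) else 0) - 1/2

lemma xv_flip {n : ℕ} (v0 : Fin n → Bool) (v : Fin n → Bool) (i : Fin n) :
    xv v0 (Function.update v i (!v i)) i = - xv v0 v i := by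
  unfold xv
  simp only [Function.update_self]
  cases hv : v i <;> cases hv0 : v0 i <;> norm_num

lemma xv_flip_ne {n : ℕ} (v0 : Fin n → Bool) (v : Fin n → Bool) {i j : Fin n} (h : j ≠ i) :
    xv v0 (Function.update v i (!v i)) j = xv v0 v j := by
  unfold xv
  rw [Function.update_of_ne h]

lemma xv_sq {n : ℕ} (v0 : Fin n → Bool) (v : Fin n → Bool) (i : Fin n) :
    xv v0 v i ^ 2 = 1/4 := by
  unfold xv
  by_cases h : v i ≠ v0 i <;> simp [h] <;> norm_num

lemma card_bool_fun (n : ℕ) : ((Finset.univ : Finset (Fin n → Bool)).card : ℝ) = 2^n := by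
  rw [Finset.card_univ]
  simp [Fintype.card_fun]

/-- Sum of the centered count over all vectors is 0. -/
lemma sum_A_zero {n : ℕ} (v0 : Fin n → Bool) :
    ∑ v : Fin n → Bool, ∑ i, xv v0 v i = 0 := by
  rw [Finset.sum_comm]
  apply Finset.sum_eq_zero
  intro i _
  exact flip_sum_zero i _ (fun v => xv_flip v0 v i)

/-- Sum of the squared centered count. -/
lemma sum_A_sq {n : ℕ} (v0 : Fin n → Bool) :
    ∑ v : Fin n → Bool, (∑ i, xv v0 v i) ^ 2 = n * 2^n / 4 := by
  have hexp : ∀ v : Fin n → Bool, (∑ i, xv v0 v i) ^ 2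
      = ∑ i, ∑ j, xv v0 v i * xv v0 v j := by
    intro v; rw [sq, Finset.sum_mul_sum]
  simp_rw [hexp]
  rw [Finset.sum_comm]
  have hdiag : ∀ i : Fin n, ∑ v : Fin n → Bool, ∑ j, xv v0 v i * xv v0 v j
      = 2^n / 4 := by
    intro i
    have hsplit : ∀ v : Fin n → Bool, ∑ j, xv v0 v i * xv v0 v j
        = 1/4 + ∑ j ∈ Finset.univ.erase i, xv v0 v i * xv v0 v j := by
      intro v
      rw [← Finset.add_sum_erase _ _ (Finset.mem_univ i), ← sq, xv_sq]
    simp_rw [hsplit]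
    rw [Finset.sum_add_distrib, Finset.sum_comm]
    have h0 : ∑ j ∈ Finset.univ.erase i, ∑ v : Fin n → Bool, xv v0 v i * xv v0 v j = 0 := by
      apply Finset.sum_eq_zero
      intro j hj
      have hji : j ≠ i := Finset.ne_of_mem_erase hj
      apply flip_sum_zero i
      intro v
      rw [xv_flip, xv_flip_ne v0 v hji]; ring
    rw [h0, add_zero, Finset.sum_const, nsmul_eq_mul, card_bool_fun]
    ring
  rw [Finset.sum_congr rfl (fun i _ => hdiag i), Finset.sum_const, nsmul_eq_mul,
    Finset.card_univ, Fintype.card_fin]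
  ring

lemma count_eq {n : ℕ} (v0 : Fin n → Bool) (v : Fin n → Bool) :
    ((Finset.univ.filter (fun i : Fin n => v i ≠ v0 i)).card : ℝ)
      = (∑ i, xv v0 v i) + n / 2 := by
  unfold xv
  rw [Finset.sum_sub_distrib, Finset.sum_boole, Finset.sum_const, nsmul_eq_mul,
    Finset.card_univ, Fintype.card_fin]
  ring

/-- Fix a reference configuration `(v0, h0) ∈ {−1,1}^n × {−1,1}^m` (encoded by
`Bool` functions) and draw `s = (v, h)` uniformly at random from the `2^(n+m)`
configurations. Let `D s = n_v/n + m_h/m − 2 n_v m_h/(n m)` be the distance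
from the reference, where `n_v` (resp. `m_h`) counts the visible (resp. hidden)
coordinates on which `s` differs from `(v0, h0)`. Then `Var(D) = 1/(4 n m)`. -/
theorem rbm_distance_variance (n m : ℕ) (hn : 0 < n) (hm : 0 < m)
    (v0 : Fin n → Bool) (h0 : Fin m → Bool) :
    (fun D : ((Fin n → Bool) × (Fin m → Bool)) → ℝ =>
      (∑ s : (Fin n → Bool) × (Fin m → Bool), D s ^ 2) /
          (Fintype.card ((Fin n → Bool) × (Fin m → Bool)) : ℝ) -
        ((∑ s : (Fin n → Bool) × (Fin m → Bool), D s) /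
          (Fintype.card ((Fin n → Bool) × (Fin m → Bool)) : ℝ)) ^ 2)
      (fun s =>
        (((Finset.univ.filter (fun i : Fin n => s.1 i ≠ v0 i)).card : ℝ) / n) +
        (((Finset.univ.filter (fun j : Fin m => s.2 j ≠ h0 j)).card : ℝ) / m) -
        2 * ((Finset.univ.filter (fun i : Fin n => s.1 i ≠ v0 i)).card : ℝ) *
          ((Finset.univ.filter (fun j : Fin m => s.2 j ≠ h0 j)).card : ℝ) / (n * m)) =
    1 / (4 * n * m) := by
  have hn' : (n : ℝ) ≠ 0 := Nat.cast_ne_zero.mpr hn.ne'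
  have hm' : (m : ℝ) ≠ 0 := Nat.cast_ne_zero.mpr hm.ne'
  set A : (Fin n → Bool) → ℝ := fun v => ∑ i, xv v0 v i with hA
  set B : (Fin m → Bool) → ℝ := fun h => ∑ j, xv h0 h j with hB
  have hD : ∀ s : (Fin n → Bool) × (Fin m → Bool),
      ((((Finset.univ.filter (fun i : Fin n => s.1 i ≠ v0 i)).card : ℝ) / n) +
        (((Finset.univ.filter (fun j : Fin m => s.2 j ≠ h0 j)).card : ℝ) / m) -
        2 * ((Finset.univ.filter (fun i : Fin n => s.1 i ≠ v0 i)).card : ℝ) *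
          ((Finset.univ.filter (fun j : Fin m => s.2 j ≠ h0 j)).card : ℝ) / (n * m))
      = 1/2 - 2 * A s.1 * B s.2 / (n * m) := by
    intro s
    rw [count_eq v0 s.1, count_eq h0 s.2]
    field_simp
    ring
  simp only [hD]
  have hSA : ∑ v : Fin n → Bool, A v = 0 := sum_A_zero v0
  have hSB : ∑ h : Fin m → Bool, B h = 0 := sum_A_zero h0
  have hSA2 : ∑ v : Fin n → Bool, (A v)^2 = n * 2^n / 4 := sum_A_sq v0
  have hSB2 : ∑ h : Fin m → Bool, (B h)^2 = m * 2^m / 4 := sum_A_sq h0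
  have hcard : (Fintype.card ((Fin n → Bool) × (Fin m → Bool)) : ℝ) = 2^n * 2^m := by
    simp [Fintype.card_fun]
  have ecross : ∑ s : (Fin n → Bool) × (Fin m → Bool),
      (2 * A s.1 * B s.2 / (n*m) : ℝ) = 0 := by
    rw [Fintype.sum_prod_type]
    apply Finset.sum_eq_zero
    intro v _
    have : ∑ h : Fin m → Bool, (2 * A v * B h / (n*m) : ℝ)
        = 2 * A v * (∑ h : Fin m → Bool, B h) / (n*m) := by
      simp only [Finset.mul_sum, Finset.sum_div]
    rw [this, hSB]
    simp
  have econst : ∀ c : ℝ, ∑ _s : (Fin n → Bool) × (Fin m → Bool), c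
      = 2^n * 2^m * c := by
    intro c
    rw [Finset.sum_const, nsmul_eq_mul, Finset.card_univ, hcard]
  have hsum1 : ∑ s : (Fin n → Bool) × (Fin m → Bool), (1/2 - 2 * A s.1 * B s.2 / (n*m) : ℝ)
      = 2^n * 2^m / 2 := by
    rw [Finset.sum_sub_distrib, ecross, econst]
    ring
  have hsum2 : ∑ s : (Fin n → Bool) × (Fin m → Bool), (1/2 - 2 * A s.1 * B s.2 / (n*m) : ℝ)^2
      = 2^n * 2^m / 4 + 2^n * 2^m / (4 * n * m) := by
    have hexp : ∀ s : (Fin n → Bool) × (Fin m → Bool),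
        (1/2 - 2 * A s.1 * B s.2 / (n*m) : ℝ)^2
        = 1/4 - 2 * A s.1 * B s.2 / (n*m) + 4 * (A s.1)^2 * (B s.2)^2 / (n*m)^2 := by
      intro s; field_simp; ring
    simp_rw [hexp]
    rw [Finset.sum_add_distrib, Finset.sum_sub_distrib, ecross, econst, sub_zero]
    have e2 : ∑ s : (Fin n → Bool) × (Fin m → Bool),
        (4 * (A s.1)^2 * (B s.2)^2 / (n*m)^2 : ℝ) = 2^n * 2^m / (4 * n * m) := by
      rw [Fintype.sum_prod_type]
      have step1 : ∀ v : Fin n → Bool, ∑ h : Fin m → Bool,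
          (4 * (A v)^2 * (B h)^2 / (n*m)^2 : ℝ)
          = 4 * (A v)^2 * (m * 2^m / 4) / (n*m)^2 := by
        intro v
        rw [← hSB2]
        simp only [Finset.mul_sum, Finset.sum_div]
      rw [Finset.sum_congr rfl (fun v _ => step1 v)]
      have step2 : ∑ v : Fin n → Bool, (4 * (A v)^2 * (m * 2^m / 4) / (n*m)^2 : ℝ)
          = 4 * (n * 2^n / 4) * (m * 2^m / 4) / (n*m)^2 := by
        rw [← hSA2]
        simp only [Finset.mul_sum, Finset.sum_mul, Finset.sum_div]
      rw [step2]
      field_simp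
    rw [e2]
    ring
  rw [hsum1, hsum2, hcard]
  have h2n : (2:ℝ)^n ≠ 0 := by positivity
  have h2m : (2:ℝ)^m ≠ 0 := by positivity
  field_simp
  ring
end

section
/- Let W ∈ ℝ^{n×m} define a gauged RBM, i.e. (𝟙,𝟙) minimizes E_W over {−1,1}^n × {−1,1}^m, with ground state energy E0 = −∑_{i,j} W_{ij}. For γ ∈ ℝ let W'_{ij} = W_{ij} − γ. Then the variances of the energies with respect to the uniform distribution over all 2^{n+m} configurations satisfy the exact identity Var(E_{W'}) − Var(E_W) = ((E0 + γnm)² − E0²)/(nm). -/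
open Finset

noncomputable def sgnB (b : Bool) : ℝ := if b then 1 else -1

lemma sgnB_not (b : Bool) : sgnB (!b) = - sgnB b := by cases b <;> simp [sgnB]
lemma sgnB_mul_self (b : Bool) : sgnB b * sgnB b = 1 := by cases b <;> simp [sgnB]

lemma sum_flip {k : ℕ} (i : Fin k) (g : (Fin k → Bool) → ℝ)
    (h : ∀ v, g (Function.update v i (!(v i))) = - g v) :
    ∑ v : Fin k → Bool, g v = 0 := by
  have h1 : ∑ v : Fin k → Bool, g (Function.update v i (!(v i))) = ∑ v : Fin k → Bool, g v :=
    Equiv.sum_comp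
      ⟨fun v => Function.update v i (!(v i)), fun v => Function.update v i (!(v i)),
       fun v => by simp [Function.update_idem], fun v => by simp [Function.update_idem]⟩ g
  rw [Finset.sum_congr rfl fun v _ => h v, Finset.sum_neg_distrib] at h1
  linarith

lemma sum_sgnB_single {k : ℕ} (i : Fin k) :
    ∑ v : Fin k → Bool, sgnB (v i) = 0 := by
  refine sum_flip i _ fun v => ?_
  simp [sgnB_not]

lemma sum_sgnB_pair {k : ℕ} (i i' : Fin k) :
    ∑ v : Fin k → Bool, sgnB (v i) * sgnB (v i') =
      if i = i' then (2 ^ k : ℝ) else 0 := by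
  by_cases h : i = i'
  · subst h
    simp only [sgnB_mul_self, if_true, Finset.sum_const, Finset.card_univ]
    simp
  · rw [if_neg h]
    refine sum_flip i _ fun v => ?_
    rw [Function.update_self, Function.update_of_ne (Ne.symm h), sgnB_not]
    ring

/-- The energy of an unbiased `(n,m)`-RBM with weights `W` at a `±1`
configuration encoded by Booleans (`true ↦ +1`, `false ↦ −1`). -/
noncomputable def rbmEnergyB (n m : ℕ) (W : Fin n → Fin m → ℝ)
    (s : (Fin n → Bool) × (Fin m → Bool)) : ℝ :=
  -(∑ i : Fin n, ∑ j : Fin m,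
      W i j * (if s.1 i then (1 : ℝ) else -1) * (if s.2 j then (1 : ℝ) else -1))

lemma energy_eq (n m : ℕ) (W : Fin n → Fin m → ℝ) (s : (Fin n → Bool) × (Fin m → Bool)) :
    rbmEnergyB n m W s = -(∑ p : Fin n × Fin m, W p.1 p.2 * sgnB (s.1 p.1) * sgnB (s.2 p.2)) := by
  rw [rbmEnergyB, Fintype.sum_prod_type]
  rfl

lemma sum_energy (n m : ℕ) (W : Fin n → Fin m → ℝ) :
    ∑ s : (Fin n → Bool) × (Fin m → Bool), rbmEnergyB n m W s = 0 := by
  simp only [energy_eq, Finset.sum_neg_distrib, neg_eq_zero]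
  rw [Finset.sum_comm]
  refine Finset.sum_eq_zero fun p _ => ?_
  rw [Fintype.sum_prod_type]
  have : ∀ v : Fin n → Bool, ∑ h : Fin m → Bool,
      W p.1 p.2 * sgnB (v p.1) * sgnB (h p.2) = 0 := by
    intro v
    rw [← Finset.mul_sum, sum_sgnB_single, mul_zero]
  simp only [this, Finset.sum_const_zero]

lemma sum_energy_sq (n m : ℕ) (W : Fin n → Fin m → ℝ) :
    ∑ s : (Fin n → Bool) × (Fin m → Bool), rbmEnergyB n m W s ^ 2 =
      2 ^ (n + m) * ∑ i : Fin n, ∑ j : Fin m, W i j ^ 2 := by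
  have hE : ∀ s : (Fin n → Bool) × (Fin m → Bool), rbmEnergyB n m W s ^ 2 =
      ∑ p : Fin n × Fin m, ∑ q : Fin n × Fin m,
        (W p.1 p.2 * W q.1 q.2) *
          ((sgnB (s.1 p.1) * sgnB (s.1 q.1)) * (sgnB (s.2 p.2) * sgnB (s.2 q.2))) := by
    intro s
    rw [energy_eq, neg_sq, sq, Finset.sum_mul_sum]
    exact Finset.sum_congr rfl fun p _ => Finset.sum_congr rfl fun q _ => by ring
  have key : ∀ p q : Fin n × Fin m,
      ∑ s : (Fin n → Bool) × (Fin m → Bool),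
        (W p.1 p.2 * W q.1 q.2) *
          ((sgnB (s.1 p.1) * sgnB (s.1 q.1)) * (sgnB (s.2 p.2) * sgnB (s.2 q.2))) =
      if q = p then (W p.1 p.2 ^ 2) * 2 ^ (n + m) else 0 := by
    intro p q
    rw [Fintype.sum_prod_type]
    have h1 : ∀ v : Fin n → Bool, ∑ h : Fin m → Bool,
        (W p.1 p.2 * W q.1 q.2) *
          ((sgnB (v p.1) * sgnB (v q.1)) * (sgnB (h p.2) * sgnB (h q.2))) =
        (W p.1 p.2 * W q.1 q.2) * (sgnB (v p.1) * sgnB (v q.1)) *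
          (if p.2 = q.2 then (2 ^ m : ℝ) else 0) := by
      intro v
      rw [← sum_sgnB_pair p.2 q.2, Finset.mul_sum]
      exact Finset.sum_congr rfl fun h _ => by ring
    simp only [h1]
    rw [← Finset.sum_mul, ← Finset.mul_sum, sum_sgnB_pair p.1 q.1]
    by_cases hq : q = p
    · subst hq
      rw [if_pos rfl, if_pos rfl, if_pos rfl, pow_add]
      ring
    · rw [if_neg hq]
      have hd : p.1 ≠ q.1 ∨ p.2 ≠ q.2 := by
        by_contra hc
        push_neg at hc
        exact hq (Prod.ext hc.1.symm hc.2.symm)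
      rcases hd with h | h
      · rw [if_neg h]
        ring
      · rw [if_neg h]
        ring
  simp only [hE]
  rw [Finset.sum_comm]
  have inner : ∀ p : Fin n × Fin m,
      (∑ s : (Fin n → Bool) × (Fin m → Bool), ∑ q : Fin n × Fin m,
        (W p.1 p.2 * W q.1 q.2) *
          ((sgnB (s.1 p.1) * sgnB (s.1 q.1)) * (sgnB (s.2 p.2) * sgnB (s.2 q.2)))) =
      W p.1 p.2 ^ 2 * 2 ^ (n + m) := by
    intro p
    rw [Finset.sum_comm, Finset.sum_congr rfl fun q _ => key p q,
      Finset.sum_ite_eq' Finset.univ p (fun _ => W p.1 p.2 ^ 2 * 2 ^ (n + m))]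
    simp
  rw [Finset.sum_congr rfl fun p _ => inner p, ← Finset.sum_mul, Fintype.sum_prod_type]
  ring

/-- Variance of a function on the configuration space, with respect to the
uniform probability measure on the `2^(n+m)` configurations. -/
noncomputable def uniformVariance (n m : ℕ)
    (f : (Fin n → Bool) × (Fin m → Bool) → ℝ) : ℝ :=
  (∑ s : (Fin n → Bool) × (Fin m → Bool), f s ^ 2) /
      (Fintype.card ((Fin n → Bool) × (Fin m → Bool)) : ℝ) -
    ((∑ s : (Fin n → Bool) × (Fin m → Bool), f s) /
      (Fintype.card ((Fin n → Bool) × (Fin m → Bool)) : ℝ)) ^ 2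

/-- For a gauged RBM (the all-ones configuration is a ground state) with ground
state energy `E0 = −∑ i j, W i j`, the mode-informed update `W' i j = W i j − γ`
changes the variance of the energies over all configurations by exactly
`((E0 + γ n m)² − E0²)/(n m)`. -/
theorem rbm_variance_change_identity (n m : ℕ) (hn : 0 < n) (hm : 0 < m)
    (W : Fin n → Fin m → ℝ) (γ : ℝ)
    (hgauge : ∀ s : (Fin n → Bool) × (Fin m → Bool),
      rbmEnergyB n m W (fun _ => true, fun _ => true) ≤ rbmEnergyB n m W s) :
    uniformVariance n m (rbmEnergyB n m (fun i j => W i j - γ)) -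
      uniformVariance n m (rbmEnergyB n m W) =
    (((-(∑ i : Fin n, ∑ j : Fin m, W i j)) + γ * n * m) ^ 2 -
        (-(∑ i : Fin n, ∑ j : Fin m, W i j)) ^ 2) / (n * m) := by
  have hcard : (Fintype.card ((Fin n → Bool) × (Fin m → Bool)) : ℝ) = 2 ^ (n + m) := by
    simp [Fintype.card_prod, pow_add]
  have h2 : (2 : ℝ) ^ (n + m) ≠ 0 := by positivity
  have hnm : (n : ℝ) * m ≠ 0 := by positivity
  have hL : ∀ A : ℝ, 2 ^ (n + m) * A / (2 : ℝ) ^ (n + m) - ((0 : ℝ) / 2 ^ (n + m)) ^ 2 = A := by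
    intro A
    field_simp
    ring
  rw [uniformVariance, uniformVariance, hcard, sum_energy, sum_energy,
    sum_energy_sq, sum_energy_sq, hL, hL]
  have expand : ∑ i : Fin n, ∑ j : Fin m, (W i j - γ) ^ 2 =
      (∑ i : Fin n, ∑ j : Fin m, W i j ^ 2) -
        2 * γ * (∑ i : Fin n, ∑ j : Fin m, W i j) + (n : ℝ) * m * γ ^ 2 := by
    have h : ∀ i j, (W i j - γ) ^ 2 = W i j ^ 2 - 2 * γ * W i j + γ ^ 2 := fun i j => by ring
    simp only [h, Finset.sum_add_distrib, Finset.sum_sub_distrib, ← Finset.mul_sum,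
      Finset.sum_const, Finset.card_univ, Fintype.card_fin, nsmul_eq_mul]
    push_cast
    ring
  rw [expand, eq_div_iff hnm]
  ring
end

section
/- Let W ∈ ℝ^{n×m} have all entries nonnegative (an RBM with zero frustration). Then the all-(+1) visible configuration simultaneously maximizes the joint and marginal objectives: (i) for every (v,h) ∈ {−1,1}^n × {−1,1}^m, ∑_{i,j} W_{ij} v_i h_j ≤ ∑_{i,j} W_{ij}; and (ii) for every v ∈ {−1,1}^n, ∏_{j=1}^m 2·cosh(∑_i W_{ij} v_i) ≤ ∏_{j=1}^m 2·cosh(∑_i W_{ij}). Hence argmax_v Q(v) and argmax_v P(v) are both attained at v = 𝟙. -/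
open Finset

/-- For an RBM with zero frustration (all weights nonnegative), the all-(+1)
visible configuration simultaneously maximizes the joint and marginal
objectives: (i) `∑ i j, W i j * v i * h j ≤ ∑ i j, W i j` for every `±1`
configuration `(v, h)`; and (ii)
`∏ j, 2·cosh (∑ i, W i j * v i) ≤ ∏ j, 2·cosh (∑ i, W i j)` for every `±1`
visible configuration `v`. -/
theorem rbm_zero_frustration_mode_correspondence (n m : ℕ)
    (W : Fin n → Fin m → ℝ) (hW : ∀ i j, 0 ≤ W i j) :
    (∀ (v : Fin n → ℝ) (h : Fin m → ℝ),
      (∀ i, v i = 1 ∨ v i = -1) → (∀ j, h j = 1 ∨ h j = -1) →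
      ∑ i : Fin n, ∑ j : Fin m, W i j * v i * h j ≤
        ∑ i : Fin n, ∑ j : Fin m, W i j) ∧
    (∀ v : Fin n → ℝ, (∀ i, v i = 1 ∨ v i = -1) →
      ∏ j : Fin m, 2 * Real.cosh (∑ i : Fin n, W i j * v i) ≤
        ∏ j : Fin m, 2 * Real.cosh (∑ i : Fin n, W i j)) := by
  constructor
  · intro v h hv hh
    refine Finset.sum_le_sum fun i _ => Finset.sum_le_sum fun j _ => ?_
    rcases hv i with h1 | h1 <;> rcases hh j with h2 | h2 <;>
      simp [h1, h2] <;> nlinarith [hW i j]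
  · intro v hv
    refine Finset.prod_le_prod (fun j _ => by positivity) fun j _ => ?_
    have h1 : |∑ i : Fin n, W i j * v i| ≤ |∑ i : Fin n, W i j| := by
      rw [abs_of_nonneg (Finset.sum_nonneg fun i _ => hW i j)]
      refine (Finset.abs_sum_le_sum_abs _ _).trans (Finset.sum_le_sum fun i _ => ?_)
      rcases hv i with h2 | h2 <;> simp [abs_mul, h2, abs_of_nonneg (hW i j)]
    have := Real.cosh_le_cosh.2 h1
    linarith
end

section
/- Let W ∈ ℝ^{n×m} and v* ∈ {−1,1}^n with angle variables θ*_j = ∑_i W_{ij} v*_i. Assume (a) θ*_j ≠ 0 for every j, and (b) for every v ∈ {−1,1}^n with v ≠ v* and v ≠ −v*, ∑_{j=1}^m |∑_i W_{ij} v_i| < ∑_{j=1}^m |θ*_j| (i.e., v* is, up to global spin flip, the unique visible component of the ground state). Then there exists M > 0 such that for every v ∈ {−1,1}^n, ∏_{j=1}^m cosh(M·∑_i W_{ij} v_i) ≤ ∏_{j=1}^m cosh(M·θ*_j); that is, for the rescaled RBM with weights M·W, the mode of the marginal distribution over the visible layer coincides (up to global spin flip) with the visible component of the mode of the joint distribution.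 -/
open Finset

lemma cosh_le_exp_abs (x : ℝ) : Real.cosh x ≤ Real.exp |x| := by
  rw [Real.cosh_eq]
  have h1 := Real.exp_le_exp.mpr (le_abs_self x)
  have h2 := Real.exp_le_exp.mpr (neg_le_abs x)
  linarith

lemma exp_abs_le_two_cosh (x : ℝ) : Real.exp |x| ≤ 2 * Real.cosh x := by
  rw [Real.cosh_eq]
  rcases abs_cases x with ⟨h, _⟩ | ⟨h, _⟩ <;> rw [h] <;>
    [linarith [Real.exp_pos (-x)]; linarith [Real.exp_pos x]]

/-- Large-weight modal correspondence: let `θ* j = ∑ i, W i j * v* i` be the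
angle variables of `v* ∈ {−1,1}^n`, and assume (a) `θ* j ≠ 0` for all `j`, and
(b) every other visible configuration `v ∈ {−1,1}^n` with `v ≠ v*` and
`v ≠ −v*` satisfies `∑ j, |∑ i, W i j * v i| < ∑ j, |θ* j|`. Then there is an
`M > 0` such that for the rescaled weights `M·W`,
`∏ j, cosh (M·∑ i, W i j * v i) ≤ ∏ j, cosh (M·θ* j)` for every
`v ∈ {−1,1}^n`. -/
theorem rbm_large_weights_mode_correspondence (n m : ℕ)
    (W : Fin n → Fin m → ℝ) (vs : Fin n → ℝ)
    (hvs : ∀ i, vs i = 1 ∨ vs i = -1)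
    (hθ : ∀ j : Fin m, (∑ i : Fin n, W i j * vs i) ≠ 0)
    (huniq : ∀ v : Fin n → ℝ, (∀ i, v i = 1 ∨ v i = -1) →
      v ≠ vs → v ≠ (fun i => -(vs i)) →
      (∑ j : Fin m, |∑ i : Fin n, W i j * v i|) <
        ∑ j : Fin m, |∑ i : Fin n, W i j * vs i|) :
    ∃ M : ℝ, 0 < M ∧ ∀ v : Fin n → ℝ, (∀ i, v i = 1 ∨ v i = -1) →
      ∏ j : Fin m, Real.cosh (M * ∑ i : Fin n, W i j * v i) ≤
        ∏ j : Fin m, Real.cosh (M * ∑ i : Fin n, W i j * vs i) := by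
  classical
  set S : (Fin n → ℝ) → ℝ := fun v => ∑ j : Fin m, |∑ i : Fin n, W i j * v i| with hS
  set c : (Fin n → Bool) → (Fin n → ℝ) := fun b i => if b i then 1 else -1 with hc
  set T : Finset (Fin n → Bool) :=
    Finset.univ.filter (fun b => c b ≠ vs ∧ c b ≠ fun i => -(vs i)) with hT
  have hcb : ∀ b : Fin n → Bool, ∀ i, c b i = 1 ∨ c b i = -1 := by
    intro b i; by_cases h : b i <;> simp [hc, h]
  have hgap : ∀ b ∈ T, 0 < S vs - S (c b) := by
    intro b hb
    rw [hT, Finset.mem_filter] at hb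
    have := huniq (c b) (hcb b) hb.2.1 hb.2.2
    simp only [hS]
    linarith
  set δ : ℝ := if h : T.Nonempty then T.inf' h (fun b => S vs - S (c b)) else 1 with hδdef
  have hδ : 0 < δ := by
    rw [hδdef]
    split_ifs with h
    · exact (Finset.lt_inf'_iff h).mpr (fun b hb => hgap b hb)
    · norm_num
  have hδle : ∀ b ∈ T, δ ≤ S vs - S (c b) := by
    intro b hb
    rw [hδdef]
    rw [dif_pos ⟨b, hb⟩]
    exact Finset.inf'_le _ hb
  set M : ℝ := max 1 ((m * Real.log 2 + 1) / δ) with hM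
  have hM1 : (1:ℝ) ≤ M := le_max_left _ _
  have hMpos : 0 < M := lt_of_lt_of_le one_pos hM1
  have hMδ : m * Real.log 2 + 1 ≤ M * δ := by
    have := le_max_right 1 ((m * Real.log 2 + 1) / δ)
    calc m * Real.log 2 + 1 = ((m * Real.log 2 + 1) / δ) * δ := by field_simp
    _ ≤ M * δ := by nlinarith
  refine ⟨M, hMpos, ?_⟩
  intro v hv
  by_cases hv1 : v = vs
  · subst hv1; exact le_refl _
  by_cases hv2 : v = fun i => -(vs i)
  · subst hv2
    apply le_of_eq
    apply Finset.prod_congr rfl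
    intro j _
    have : ∑ i : Fin n, W i j * (-(vs i)) = -(∑ i : Fin n, W i j * vs i) := by
      rw [← Finset.sum_neg_distrib]; exact Finset.sum_congr rfl (fun i _ => by ring)
    rw [this, mul_neg, Real.cosh_neg]
  · -- the generic case
    set b : Fin n → Bool := fun i => decide (v i = 1) with hb
    have hcbv : c b = v := by
      funext i
      rcases hv i with h | h
      · simp [hc, hb, h]
      · have hf : b i = false := by simp [hb, h]; norm_num
        simp [hc, hf, h]
    have hbT : b ∈ T := by
      rw [hT, Finset.mem_filter]
      exact ⟨Finset.mem_univ _, by rw [hcbv]; exact hv1, by rw [hcbv]; exact hv2⟩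
    have hgapv : δ ≤ S vs - S v := by
      have := hδle b hbT
      rwa [hcbv] at this
    -- upper bound for v-product
    have hA : ∏ j : Fin m, Real.cosh (M * ∑ i : Fin n, W i j * v i) ≤ Real.exp (M * S v) := by
      calc ∏ j : Fin m, Real.cosh (M * ∑ i : Fin n, W i j * v i)
          ≤ ∏ j : Fin m, Real.exp (M * |∑ i : Fin n, W i j * v i|) := by
            apply Finset.prod_le_prod
            · intro j _; exact (Real.cosh_pos _).le
            · intro j _
              have := cosh_le_exp_abs (M * ∑ i : Fin n, W i j * v i)
              rwa [abs_mul, abs_of_pos hMpos] at this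
        _ = Real.exp (M * S v) := by
            rw [← Real.exp_sum, hS, Finset.mul_sum]
    -- lower bound for vs-product
    have hB : Real.exp (M * S vs) ≤ 2 ^ m * ∏ j : Fin m, Real.cosh (M * ∑ i : Fin n, W i j * vs i) := by
      calc Real.exp (M * S vs)
          = ∏ j : Fin m, Real.exp (M * |∑ i : Fin n, W i j * vs i|) := by
            rw [← Real.exp_sum, hS, Finset.mul_sum]
        _ ≤ ∏ j : Fin m, (2 * Real.cosh (M * ∑ i : Fin n, W i j * vs i)) := by
            apply Finset.prod_le_prod
            · intro j _; exact (Real.exp_pos _).le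
            · intro j _
              have := exp_abs_le_two_cosh (M * ∑ i : Fin n, W i j * vs i)
              rwa [abs_mul, abs_of_pos hMpos] at this
        _ = 2 ^ m * ∏ j : Fin m, Real.cosh (M * ∑ i : Fin n, W i j * vs i) := by
            rw [Finset.prod_mul_distrib, Finset.prod_const]
            simp
    have hC : 2 ^ m * Real.exp (M * S v) ≤ Real.exp (M * S vs) := by
      have h2m : (2:ℝ) ^ m = Real.exp (m * Real.log 2) := by
        rw [Real.exp_nat_mul, Real.exp_log two_pos]
      rw [h2m, ← Real.exp_add, Real.exp_le_exp]
      nlinarith [Real.exp_pos (1:ℝ)]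
    have h2pos : (0:ℝ) < 2 ^ m := by positivity
    calc ∏ j : Fin m, Real.cosh (M * ∑ i : Fin n, W i j * v i)
        ≤ Real.exp (M * S v) := hA
      _ ≤ Real.exp (M * S vs) / 2 ^ m := by
          rw [le_div_iff₀ h2pos]; linarith [hC]
      _ ≤ ∏ j : Fin m, Real.cosh (M * ∑ i : Fin n, W i j * vs i) := by
          rw [div_le_iff₀ h2pos]; linarith [hB]
end
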